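/- Let p_1 < ... < p_k be distinct primes and S the numerical monoid generated by (p_1···p_k)/p_k, ..., (p_1···p_k)/p_1. Then S has a unique Betti element, and the set of catenary degrees of S is C(S) = {0, p_k}. -/

import Mathlib

/-- The set of factorizations of `n` over the generators `gens`. -/
def Zset {k : ℕ} (gens : Fin k → ℕ) (n : ℕ) : Set (Fin k → ℕ) :=
  {a | ∑ i, a i * gens i = n}

/-- The length of a factorization. -/
def flen {k : ℕ} (a : Fin k → ℕ) : ℕ := ∑ i, a i

/-- The distance between two factorizations:
`max (|a - gcd(a,b)|, |b - gcd(a,b)|)` (componentwise gcd = min). -/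
def fdist {k : ℕ} (a b : Fin k → ℕ) : ℕ :=
  max (∑ i, (a i - b i)) (∑ i, (b i - a i))

/-- There is an `N`-chain of factorizations within `Z` from `a` to `b`. -/
def IsNChain {k : ℕ} (Z : Set (Fin k → ℕ)) (N : ℕ) (a b : Fin k → ℕ) : Prop :=
  ∃ l : List (Fin k → ℕ), l.head? = some a ∧ l.getLast? = some b ∧
    (∀ x ∈ l, x ∈ Z) ∧ l.Chain' (fun x y => fdist x y ≤ N)

/-- The catenary degree of `n`: the least `N` such that any two factorizations
of `n` are connected by an `N`-chain. -/
noncomputable def catDeg {k : ℕ} (gens : Fin k → ℕ) (n : ℕ) : ℕ :=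
  sInf {N | ∀ a ∈ Zset gens n, ∀ b ∈ Zset gens n, IsNChain (Zset gens n) N a b}

/-- `n` is a Betti element: the graph on `Z(n)` joining factorizations with
nonzero componentwise gcd is disconnected. -/
def IsBetti {k : ℕ} (gens : Fin k → ℕ) (n : ℕ) : Prop :=
  ∃ a ∈ Zset gens n, ∃ b ∈ Zset gens n,
    ¬ Relation.ReflTransGen
      (fun x y => x ∈ Zset gens n ∧ y ∈ Zset gens n ∧ ∃ i, min (x i) (y i) ≠ 0) a b

/-- The set of catenary degrees of elements of the monoid generated by `gens`. -/
def CatSet {k : ℕ} (gens : Fin k → ℕ) : Set ℕ :=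
  {c | ∃ n, (Zset gens n).Nonempty ∧ catDeg gens n = c}

/-!
Write `P = p₁⋯p_k` and `gᵢ = P / pᵢ`. Modulo `pᵢ` every generator but `gᵢ` vanishes and `gᵢ` is
a unit, so two factorizations of the same element agree in the `i`-th coordinate modulo `pᵢ`.
Since `pᵢ gᵢ = P` for every `i`, a factorization with at least `pᵢ` copies of `gᵢ` may trade
them for `pⱼ` copies of `gⱼ`.

Repeated trades lead from any factorization to any other in steps of distance
`max pᵢ pⱼ ≤ p_k`; a step of distance `< p_k` cannot change the `k`-th coordinate, and as soon as
an element has two factorizations, a trade into `g_k` changes it. So `c(n) ∈ {0, p_k}`.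
The factorizations of `P` are the `pᵢ eᵢ`, with pairwise disjoint supports, so `P` is a Betti
element. For `m ≠ P` a trade out of a factorization `a` keeps part of its support and may be
aimed at the support of any other factorization `b`, which links `a` and `b`.
-/

namespace Factorization

variable {k : ℕ}

lemma mem_Zset {g : Fin k → ℕ} {n : ℕ} {a : Fin k → ℕ} :
    a ∈ Zset g n ↔ ∑ i, a i * g i = n :=
  Iff.rfl

lemma sum_add_single_mul (g y : Fin k → ℕ) (i : Fin k) (c : ℕ) :
    ∑ l, (y + Pi.single i c : Fin k → ℕ) l * g l = ∑ l, y l * g l + c * g i := by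
  simp [add_mul, Finset.sum_add_distrib, Pi.single_apply]

lemma sub_single_add_single_self {a : Fin k → ℕ} {i : Fin k} {c : ℕ} (h : c ≤ a i) :
    a - Pi.single i c + Pi.single i c = a := by
  funext l
  rcases eq_or_ne l i with rfl | hl <;> simp [*]

lemma exists_lt_of_ne {g : Fin k → ℕ} (hg : ∀ i, 0 < g i) {n : ℕ} {a b : Fin k → ℕ}
    (ha : a ∈ Zset g n) (hb : b ∈ Zset g n) (hab : a ≠ b) : ∃ i, b i < a i := by
  by_contra! hle
  have hterm := (Finset.sum_eq_sum_iff_of_le fun l _ => Nat.mul_le_mul_right (g l) (hle l)).1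
    (ha.trans hb.symm)
  exact hab (funext fun l => Nat.eq_of_mul_eq_mul_right (hg l) (hterm l (Finset.mem_univ l)))

lemma eq_zero_of_mem_Zset_zero {g : Fin k → ℕ} (hg : ∀ i, 0 < g i) {x : Fin k → ℕ}
    (hx : x ∈ Zset g 0) : x = 0 := by
  by_contra hx0
  obtain ⟨i, hi⟩ := exists_lt_of_ne hg (by simp [mem_Zset]) hx (Ne.symm hx0)
  exact Nat.not_lt_zero _ hi

lemma sub_le_fdist (a b : Fin k → ℕ) (l : Fin k) : a l - b l ≤ fdist a b :=
  (Finset.single_le_sum (f := fun l => a l - b l) (fun _ _ => Nat.zero_le _)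
    (Finset.mem_univ l)).trans (le_max_left _ _)

lemma fdist_comm (a b : Fin k → ℕ) : fdist a b = fdist b a :=
  max_comm _ _

lemma fdist_sub_add_le (a u v : Fin k → ℕ) :
    fdist a (a - u + v) ≤ max (∑ i, u i) (∑ i, v i) :=
  max_le_max (Finset.sum_le_sum fun l _ => by simp only [Pi.add_apply, Pi.sub_apply]; omega)
    (Finset.sum_le_sum fun l _ => by simp only [Pi.add_apply, Pi.sub_apply]; omega)

section Chains

variable {Z : Set (Fin k → ℕ)} {N : ℕ} {a b c : Fin k → ℕ}

lemma isNChain_refl (ha : a ∈ Z) : IsNChain Z N a a :=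
  ⟨[a], rfl, rfl, by simpa using ha, List.isChain_singleton a⟩

lemma IsNChain.cons (ha : a ∈ Z) (hab : fdist a b ≤ N) (hbc : IsNChain Z N b c) :
    IsNChain Z N a c := by
  obtain ⟨_ | ⟨x, l⟩, hhead, hlast, hmem, hchain⟩ := hbc
  · simp at hhead
  obtain rfl : x = b := by simpa using hhead
  refine ⟨a :: x :: l, rfl, by rwa [List.getLast?_cons_cons], ?_, ?_⟩
  · simpa [ha] using hmem
  · exact List.isChain_cons_cons.2 ⟨hab, hchain⟩

lemma IsNChain.apply_eq {β : Type*} (f : (Fin k → ℕ) → β)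
    (hf : ∀ x ∈ Z, ∀ y ∈ Z, fdist x y ≤ N → f x = f y) (h : IsNChain Z N a b) :
    f a = f b := by
  obtain ⟨l, hhead, hlast, hmem, hchain⟩ := h
  induction l generalizing a with
  | nil => simp at hhead
  | cons x t ih =>
    obtain rfl : x = a := by simpa using hhead
    cases t with
    | nil =>
      obtain rfl : x = b := by simpa using hlast
      rfl
    | cons y t =>
      obtain ⟨hxy, hchain⟩ := List.isChain_cons_cons.1 hchain
      exact (hf x (hmem x (by simp)) y (hmem y (by simp)) hxy).trans
        (ih rfl (by rwa [List.getLast?_cons_cons] at hlast)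
          (fun z hz => hmem z (List.mem_cons_of_mem x hz)) hchain)

end Chains

lemma catDeg_eq_zero {g : Fin k → ℕ} {n : ℕ} (h : (Zset g n).Subsingleton) :
    catDeg g n = 0 :=
  Nat.sInf_eq_zero.2 <| Or.inl fun _ ha _ hb => h ha hb ▸ isNChain_refl ha

end Factorization

namespace PrimeQuotients

open Factorization

variable {k : ℕ} {p : Fin k → ℕ}

def quotGens (p : Fin k → ℕ) : Fin k → ℕ := fun i => (∏ j, p j) / p i

lemma quotGens_eq_prod_erase (hp : ∀ i, (p i).Prime) (i : Fin k) :
    quotGens p i = ∏ j ∈ Finset.univ.erase i, p j := by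
  rw [quotGens, ← Finset.mul_prod_erase Finset.univ p (Finset.mem_univ i),
    Nat.mul_div_cancel_left _ (hp i).pos]

lemma mul_quotGens (i : Fin k) : p i * quotGens p i = ∏ j, p j :=
  Nat.mul_div_cancel' (Finset.dvd_prod_of_mem p (Finset.mem_univ i))

lemma quotGens_pos (hp : ∀ i, (p i).Prime) (i : Fin k) : 0 < quotGens p i := by
  rw [quotGens_eq_prod_erase hp]
  exact Finset.prod_pos fun j _ => (hp j).pos

lemma dvd_quotGens (hp : ∀ i, (p i).Prime) {i j : Fin k} (hij : i ≠ j) :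
    p i ∣ quotGens p j := by
  rw [quotGens_eq_prod_erase hp]
  exact Finset.dvd_prod_of_mem p (Finset.mem_erase.2 ⟨hij, Finset.mem_univ i⟩)

lemma coprime_quotGens (hp : ∀ i, (p i).Prime) (hinj : Function.Injective p) (i : Fin k) :
    (p i).Coprime (quotGens p i) := by
  rw [Nat.Prime.coprime_iff_not_dvd (hp i), quotGens_eq_prod_erase hp]
  intro hdvd
  obtain ⟨j, hj, hij⟩ := ((hp i).prime.dvd_finsetProd_iff p).1 hdvd
  exact (Finset.mem_erase.1 hj).1 (hinj ((Nat.prime_dvd_prime_iff_eq (hp i) (hp j)).1 hij)).symm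

lemma modEq_of_mem_Zset (hp : ∀ i, (p i).Prime) (hinj : Function.Injective p) {n : ℕ}
    {a b : Fin k → ℕ} (ha : a ∈ Zset (quotGens p) n) (hb : b ∈ Zset (quotGens p) n)
    (i : Fin k) : a i ≡ b i [MOD p i] := by
  have hsum : ∀ x : Fin k → ℕ, ∑ l, x l * quotGens p l ≡ x i * quotGens p i [MOD p i] := by
    intro x
    rw [← Finset.add_sum_erase _ _ (Finset.mem_univ i)]
    refine (Nat.modEq_zero_iff_dvd.2 (Finset.dvd_sum fun l hl => ?_)).add_left _
    exact Dvd.dvd.mul_left (dvd_quotGens hp (Finset.mem_erase.1 hl).1.symm) _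
  refine Nat.ModEq.cancel_right_of_coprime (c := quotGens p i) (coprime_quotGens hp hinj i) ?_
  exact (hsum a).symm.trans ((mem_Zset.1 ha).trans (mem_Zset.1 hb).symm ▸ hsum b)

lemma add_le_of_lt (hp : ∀ i, (p i).Prime) (hinj : Function.Injective p) {n : ℕ}
    {a b : Fin k → ℕ} (ha : a ∈ Zset (quotGens p) n) (hb : b ∈ Zset (quotGens p) n)
    {i : Fin k} (hlt : b i < a i) : b i + p i ≤ a i := by
  have hdvd := (Nat.modEq_iff_dvd' hlt.le).1 (modEq_of_mem_Zset hp hinj hb ha i)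
  have := Nat.le_of_dvd (Nat.sub_pos_of_lt hlt) hdvd
  omega

lemma add_single_mem_Zset_iff {n : ℕ} {y : Fin k → ℕ} {i : Fin k} :
    y + Pi.single i (p i) ∈ Zset (quotGens p) n ↔ ∑ l, y l * quotGens p l + ∏ j, p j = n := by
  rw [mem_Zset, sum_add_single_mul, mul_quotGens]

lemma sub_single_add_single_mem_Zset {n : ℕ} {a : Fin k → ℕ} (ha : a ∈ Zset (quotGens p) n)
    {i : Fin k} (hi : p i ≤ a i) (j : Fin k) :
    a - Pi.single i (p i) + Pi.single j (p j) ∈ Zset (quotGens p) n := by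
  rw [← sub_single_add_single_self hi, add_single_mem_Zset_iff] at ha
  exact add_single_mem_Zset_iff.2 ha


lemma isNChain_of_forall_le (hp : ∀ i, (p i).Prime) (hinj : Function.Injective p) {n N : ℕ}
    (hN : ∀ i, p i ≤ N) {a b : Fin k → ℕ} (ha : a ∈ Zset (quotGens p) n)
    (hb : b ∈ Zset (quotGens p) n) : IsNChain (Zset (quotGens p) n) N a b := by
  induction hd : ∑ l, (a l - b l) using Nat.strong_induction_on generalizing a with
  | _ d ih =>
  rcases eq_or_ne a b with rfl | hab
  · exact isNChain_refl ha
  obtain ⟨i, hi⟩ := exists_lt_of_ne (quotGens_pos hp) ha hb hab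
  obtain ⟨j, hj⟩ := exists_lt_of_ne (quotGens_pos hp) hb ha hab.symm
  have hgap_i := add_le_of_lt hp hinj ha hb hi
  have hgap_j := add_le_of_lt hp hinj hb ha hj
  have hij : i ≠ j := by rintro rfl; omega
  set a' := a - Pi.single i (p i) + Pi.single j (p j) with ha'_def
  have ha' : a' ∈ Zset (quotGens p) n := sub_single_add_single_mem_Zset ha (by omega) j
  have hcloser : ∑ l, (a' l - b l) < d := by
    rw [← hd]
    refine Finset.sum_lt_sum (fun l _ => ?_) ⟨i, Finset.mem_univ i, ?_⟩
    · simp only [ha'_def, Pi.add_apply, Pi.sub_apply, Pi.single_apply]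
      split_ifs <;> subst_vars <;> omega
    · have := (hp i).pos
      simp [ha'_def, hij]
      omega
  refine (ih _ hcloser ha' rfl).cons ha ?_
  calc fdist a a' ≤ max (∑ l, Pi.single i (p i) l) (∑ l, Pi.single j (p j) l) :=
        fdist_sub_add_le a _ _
    _ = max (p i) (p j) := by simp
    _ ≤ N := max_le (hN i) (hN j)

lemma coord_eq_of_fdist_lt (hp : ∀ i, (p i).Prime) (hinj : Function.Injective p) {n : ℕ}
    {x y : Fin k → ℕ} (hx : x ∈ Zset (quotGens p) n) (hy : y ∈ Zset (quotGens p) n)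
    {l : Fin k} (hlt : fdist x y < p l) : x l = y l := by
  by_contra hne
  rcases Nat.lt_or_gt_of_ne hne with h | h
  · have := add_le_of_lt hp hinj hy hx h
    have := sub_le_fdist y x l
    rw [fdist_comm] at this
    omega
  · have := add_le_of_lt hp hinj hx hy h
    have := sub_le_fdist x y l
    omega

lemma catDeg_eq_of_ne (hp : ∀ i, (p i).Prime) (hinj : Function.Injective p) {l : Fin k}
    (hmax : ∀ i, p i ≤ p l) {n : ℕ} {a b : Fin k → ℕ} (ha : a ∈ Zset (quotGens p) n)
    (hb : b ∈ Zset (quotGens p) n) (hab : a ≠ b) : catDeg (quotGens p) n = p l := by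
  refine IsLeast.csInf_eq ⟨fun x hx y hy => isNChain_of_forall_le hp hinj hmax hx hy,
    fun N hN => ?_⟩
  by_contra! hlt
  obtain ⟨c, hc, d, hd, hcd⟩ :
      ∃ c ∈ Zset (quotGens p) n, ∃ d ∈ Zset (quotGens p) n, c l ≠ d l := by
    by_cases hl : a l = b l
    · obtain ⟨i, hi⟩ := exists_lt_of_ne (quotGens_pos hp) ha hb hab
      have hil : i ≠ l := by rintro rfl; omega
      have hpi : p i ≤ a i := by have := add_le_of_lt hp hinj ha hb hi; omega
      refine ⟨a, ha, _, sub_single_add_single_mem_Zset ha hpi l, ?_⟩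
      have := (hp l).pos
      simp [hil.symm]
      omega
    · exact ⟨a, ha, b, hb, hl⟩
  exact hcd <| (hN c hc d hd).apply_eq (· l) fun x hx y hy hxy =>
    coord_eq_of_fdist_lt hp hinj hx hy (hxy.trans_lt hlt)

lemma single_mem_Zset_prod (i : Fin k) : Pi.single i (p i) ∈ Zset (quotGens p) (∏ j, p j) := by
  simp [mem_Zset, Pi.single_apply, mul_quotGens]

lemma single_ne_single (hp : ∀ i, (p i).Prime) {i j : Fin k} (hij : i ≠ j) :
    (Pi.single i (p i) : Fin k → ℕ) ≠ Pi.single j (p j) :=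
  fun h => (hp i).ne_zero (by simpa [hij] using congrFun h i)

lemma eq_single_of_mem_Zset_prod (hp : ∀ i, (p i).Prime) (hinj : Function.Injective p)
    {x : Fin k → ℕ} (hx : x ∈ Zset (quotGens p) (∏ j, p j)) {i : Fin k} (hi : x i ≠ 0) :
    x = Pi.single i (p i) := by
  have hdvd : p i ∣ x i := Nat.modEq_zero_iff_dvd.1 <|
    (modEq_of_mem_Zset hp hinj hx (single_mem_Zset_prod i) i).trans (by simp [Nat.ModEq])
  have hpi : p i ≤ x i := Nat.le_of_dvd (Nat.pos_of_ne_zero hi) hdvd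
  rw [← sub_single_add_single_self hpi, add_single_mem_Zset_iff] at hx
  have hrest : x - Pi.single i (p i) = 0 :=
    eq_zero_of_mem_Zset_zero (quotGens_pos hp) (mem_Zset.2 (by omega))
  rw [← sub_single_add_single_self hpi, hrest, zero_add]

lemma isBetti_prod (hp : ∀ i, (p i).Prime) (hinj : Function.Injective p) {i j : Fin k}
    (hij : i ≠ j) : IsBetti (quotGens p) (∏ j, p j) := by
  refine ⟨_, single_mem_Zset_prod i, _, single_mem_Zset_prod j,
    fun hrel => single_ne_single hp hij ?_⟩
  generalize (Pi.single j (p j) : Fin k → ℕ) = b at hrel ⊢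
  induction hrel with
  | refl => rfl
  | tail _ hstep ih =>
    obtain ⟨hx, hy, l, hl⟩ := hstep
    rw [ih, eq_single_of_mem_Zset_prod hp hinj hx (i := l) (by omega),
      eq_single_of_mem_Zset_prod hp hinj hy (i := l) (by omega)]

lemma eq_prod_of_isBetti (hp : ∀ i, (p i).Prime) (hinj : Function.Injective p) {m : ℕ}
    (hm : IsBetti (quotGens p) m) : m = ∏ j, p j := by
  obtain ⟨a, ha, b, hb, hdisc⟩ := hm
  by_contra hmP
  have hab : a ≠ b := by rintro rfl; exact hdisc .refl
  obtain ⟨i, hi⟩ := exists_lt_of_ne (quotGens_pos hp) ha hb hab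
  obtain ⟨j, hj⟩ := exists_lt_of_ne (quotGens_pos hp) hb ha hab.symm
  have hpi : p i ≤ a i := by have := add_le_of_lt hp hinj ha hb hi; omega
  set y := a - Pi.single i (p i) with hy
  have ha' : y + Pi.single j (p j) ∈ Zset (quotGens p) m :=
    sub_single_add_single_mem_Zset ha hpi j
  obtain ⟨l, hl⟩ : ∃ l, y l ≠ 0 := by
    by_contra! hy0
    rw [← sub_single_add_single_self hpi, add_single_mem_Zset_iff, ← hy] at ha
    simp [hy0] at ha
    exact hmP ha.symm
  apply hdisc
  refine .tail (.single ⟨ha, ha', l, ?_⟩) ⟨ha', hb, j, ?_⟩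
  · have : y l ≤ a l := Nat.sub_le _ _
    simp only [Pi.add_apply]
    omega
  · have := (hp j).pos
    simp only [Pi.add_apply, Pi.single_eq_same]
    omega

end PrimeQuotients

open Factorization PrimeQuotients in
/-- For distinct primes p₁ < ⋯ < p_k, the numerical monoid generated by the
numbers (p₁⋯p_k)/pᵢ has a unique Betti element, and C(S) = {0, p_k}. -/
theorem catSet_of_prime_quotients (k : ℕ) (hk : 2 ≤ k) (p : Fin k → ℕ)
    (hp : ∀ i, (p i).Prime) (hmono : StrictMono p) :
    (∃! m, IsBetti (fun i => (∏ j, p j) / p i) m) ∧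
    CatSet (fun i => (∏ j, p j) / p i) = {0, p ⟨k - 1, by omega⟩} := by
  have hinj := hmono.injective
  have hmax : ∀ i, p i ≤ p ⟨k - 1, by omega⟩ := fun i =>
    hmono.monotone (by simp [Fin.le_def]; omega)
  have hne : (⟨0, by omega⟩ : Fin k) ≠ ⟨k - 1, by omega⟩ := by simp [Fin.ext_iff]; omega
  refine ⟨⟨_, isBetti_prod hp hinj hne, fun m hm => eq_prod_of_isBetti hp hinj hm⟩, ?_⟩
  ext c
  constructor
  · rintro ⟨n, -, rfl⟩
    by_cases h : (Zset (quotGens p) n).Subsingleton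
    · exact .inl (catDeg_eq_zero h)
    · obtain ⟨x, hx, y, hy, hxy⟩ := Set.not_subsingleton_iff.1 h
      exact .inr (catDeg_eq_of_ne hp hinj hmax hx hy hxy)
  · rintro (rfl | rfl)
    · refine ⟨0, ⟨0, by simp [mem_Zset]⟩, catDeg_eq_zero fun x hx y hy => ?_⟩
      rw [eq_zero_of_mem_Zset_zero (quotGens_pos hp) hx,
        eq_zero_of_mem_Zset_zero (quotGens_pos hp) hy]
    · exact ⟨_, ⟨_, single_mem_Zset_prod (p := p) ⟨0, by omega⟩⟩, catDeg_eq_of_ne hp hinj hmax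
        (single_mem_Zset_prod _) (single_mem_Zset_prod _) (single_ne_single hp hne)⟩
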